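/- Let A and B be real symmetric positive definite n×n matrices and set X = {x ∈ ℝⁿ : ⟨Ax,x⟩ ≤ ħ} and P = {p ∈ ℝⁿ : ⟨Bp,p⟩ ≤ ħ}. Then X^ħ ⊆ P (i.e. (X,P) is a quantum dual pair) if and only if every eigenvalue of the matrix AB is ≤ 1 (equivalently, A^{1/2} B A^{1/2} ⪯ Iₙ), and X^ħ = P if and only if AB = Iₙ, i.e. B = A⁻¹. -/

import Mathlib

/-
The polar dual of the ellipsoid `{⟨Ax, x⟩ ≤ ħ}` is the ellipsoid `{⟨A⁻¹p, p⟩ ≤ ħ}`: expanding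
`⟨A(x - A⁻¹p), x - A⁻¹p⟩ ≥ 0` gives `2⟨p, x⟩ ≤ ⟨A⁻¹p, p⟩ + ⟨Ax, x⟩`, and the bound is attained
along `A⁻¹p`. By homogeneity, an inclusion `{⟨Cx, x⟩ ≤ ħ} ⊆ {⟨Bx, x⟩ ≤ ħ}` of centred ellipsoids
is the Loewner inequality `B ⪯ C`, so the two claims become `B ⪯ A⁻¹` and `B = A⁻¹`.
Conjugating by `S = A^{1/2}` turns `B ⪯ A⁻¹` into `SBS ⪯ 1`, i.e. `spectrum (SBS) ≤ 1`, and
`SBS = S⁻¹ (AB) S` has the same spectrum as `AB`.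
-/

open Matrix
open scoped MatrixOrder

variable {ι : Type*} [Fintype ι]

def ellipsoid (A : Matrix ι ι ℝ) (c : ℝ) : Set (ι → ℝ) := {x | A *ᵥ x ⬝ᵥ x ≤ c}

def quantumPolar (hbar : ℝ) (X : Set (ι → ℝ)) : Set (ι → ℝ) := {p | ∀ x ∈ X, p ⬝ᵥ x ≤ hbar}

@[simp]
theorem mem_ellipsoid {A : Matrix ι ι ℝ} {c : ℝ} {x : ι → ℝ} :
    x ∈ ellipsoid A c ↔ A *ᵥ x ⬝ᵥ x ≤ c :=
  Iff.rfl

theorem exists_pos_sq_mul_eq {a c : ℝ} (ha : 0 < a) (hc : 0 < c) : ∃ t > 0, t ^ 2 * c = a :=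
  ⟨Real.sqrt (a / c), Real.sqrt_pos.2 (div_pos ha hc),
    by rw [Real.sq_sqrt (div_pos ha hc).le, div_mul_cancel₀ _ hc.ne']⟩

theorem Matrix.IsSymm.mulVec_dotProduct_comm {A : Matrix ι ι ℝ} (hA : A.IsSymm) (x y : ι → ℝ) :
    A *ᵥ x ⬝ᵥ y = A *ᵥ y ⬝ᵥ x := by
  rw [dotProduct_comm, dotProduct_mulVec, ← mulVec_transpose, hA.eq]

theorem Matrix.mulVec_smul_dotProduct_smul (A : Matrix ι ι ℝ) (t : ℝ) (x : ι → ℝ) :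
    A *ᵥ (t • x) ⬝ᵥ (t • x) = t ^ 2 * (A *ᵥ x ⬝ᵥ x) := by
  simp only [mulVec_smul, smul_dotProduct, dotProduct_smul, smul_eq_mul]
  ring

theorem Matrix.PosSemidef.mulVec_dotProduct_nonneg {A : Matrix ι ι ℝ} (hA : A.PosSemidef)
    (x : ι → ℝ) : 0 ≤ A *ᵥ x ⬝ᵥ x := by
  simpa [dotProduct_comm] using hA.dotProduct_mulVec_nonneg x

theorem Matrix.PosDef.mulVec_dotProduct_pos {A : Matrix ι ι ℝ} (hA : A.PosDef)
    {x : ι → ℝ} (hx : x ≠ 0) : 0 < A *ᵥ x ⬝ᵥ x := by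
  simpa [dotProduct_comm] using hA.dotProduct_mulVec_pos hx

theorem Matrix.PosSemidef.two_mul_mulVec_dotProduct_le {A : Matrix ι ι ℝ} (hA : A.PosSemidef)
    (x y : ι → ℝ) : 2 * (A *ᵥ y ⬝ᵥ x) ≤ A *ᵥ y ⬝ᵥ y + A *ᵥ x ⬝ᵥ x := by
  have hsymm := (isHermitian_iff_isSymm.1 hA.isHermitian).mulVec_dotProduct_comm x y
  have hsub := hA.mulVec_dotProduct_nonneg (x - y)
  simp only [mulVec_sub, sub_dotProduct, dotProduct_sub] at hsub
  linarith

theorem Matrix.le_iff_mulVec_dotProduct_le {B C : Matrix ι ι ℝ} (hB : B.IsHermitian)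
    (hC : C.IsHermitian) : B ≤ C ↔ ∀ x, B *ᵥ x ⬝ᵥ x ≤ C *ᵥ x ⬝ᵥ x := by
  have hform (x : ι → ℝ) : star x ⬝ᵥ (C - B) *ᵥ x = C *ᵥ x ⬝ᵥ x - B *ᵥ x ⬝ᵥ x := by
    rw [star_trivial, dotProduct_comm, sub_mulVec, sub_dotProduct]
  rw [le_iff, posSemidef_iff_dotProduct_mulVec]
  simp only [hC.sub hB, hform, sub_nonneg, true_and]

theorem ellipsoid_subset_ellipsoid_iff {hbar : ℝ} (hhbar : 0 < hbar) {C B : Matrix ι ι ℝ}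
    (hC : C.PosDef) (hB : B.IsHermitian) :
    ellipsoid C hbar ⊆ ellipsoid B hbar ↔ B ≤ C := by
  rw [le_iff_mulVec_dotProduct_le hB hC.isHermitian]
  refine ⟨fun h x => ?_, fun h x hx => (h x).trans hx⟩
  rcases eq_or_ne x 0 with rfl | hx
  · simp
  obtain ⟨t, ht, htx⟩ := exists_pos_sq_mul_eq hhbar (hC.mulVec_dotProduct_pos hx)
  have hBtx : t • x ∈ ellipsoid B hbar := h <| by
    rw [mem_ellipsoid, mulVec_smul_dotProduct_smul, htx]
  rw [mem_ellipsoid, mulVec_smul_dotProduct_smul, ← htx] at hBtx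
  exact le_of_mul_le_mul_left hBtx (by positivity)

theorem ellipsoid_inj {hbar : ℝ} (hhbar : 0 < hbar) {C B : Matrix ι ι ℝ}
    (hC : C.PosDef) (hB : B.PosDef) :
    ellipsoid C hbar = ellipsoid B hbar ↔ C = B := by
  refine ⟨fun h => le_antisymm ?_ ?_, fun h => h ▸ rfl⟩
  · exact (ellipsoid_subset_ellipsoid_iff hhbar hB hC.isHermitian).1 h.superset
  · exact (ellipsoid_subset_ellipsoid_iff hhbar hC hB.isHermitian).1 h.subset

section

variable [DecidableEq ι]

theorem quantumPolar_ellipsoid {hbar : ℝ} (hhbar : 0 < hbar) {A : Matrix ι ι ℝ}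
    (hA : A.PosDef) : quantumPolar hbar (ellipsoid A hbar) = ellipsoid A⁻¹ hbar := by
  have hAA (p : ι → ℝ) : A *ᵥ (A⁻¹ *ᵥ p) = p := by
    rw [mulVec_mulVec, mul_nonsing_inv _ hA.det_pos.ne'.isUnit, one_mulVec]
  ext p
  refine ⟨fun hp => ?_, fun hp x hx => ?_⟩
  · rw [mem_ellipsoid]
    by_contra! hlt
    set c := A⁻¹ *ᵥ p ⬝ᵥ p
    have hc : 0 < c := hhbar.trans hlt
    -- `⟨p, ·⟩` is maximised on the ellipsoid at its boundary point in the direction `A⁻¹ p`.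
    obtain ⟨t, ht, htc⟩ := exists_pos_sq_mul_eq hhbar hc
    have hx : t • (A⁻¹ *ᵥ p) ∈ ellipsoid A hbar := by
      rw [mem_ellipsoid, mulVec_smul_dotProduct_smul, hAA, dotProduct_comm, htc]
    have hpx : t * c ≤ hbar := by
      have := hp _ hx
      rwa [dotProduct_smul, smul_eq_mul, dotProduct_comm] at this
    have hcc : hbar * c ≤ hbar * hbar :=
      calc hbar * c = (t * c) ^ 2 := by rw [← htc]; ring
        _ ≤ hbar ^ 2 := pow_le_pow_left₀ (mul_pos ht hc).le hpx 2
        _ = hbar * hbar := sq hbar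
    exact hlt.not_ge (le_of_mul_le_mul_left hcc hhbar)
  · have hFY := hA.posSemidef.two_mul_mulVec_dotProduct_le x (A⁻¹ *ᵥ p)
    rw [hAA, dotProduct_comm p (A⁻¹ *ᵥ p)] at hFY
    rw [mem_ellipsoid] at hp hx
    linarith

theorem Matrix.PosDef.exists_unit_sqrt {A : Matrix ι ι ℝ} (hA : A.PosDef) :
    ∃ S : (Matrix ι ι ℝ)ˣ, star (S : Matrix ι ι ℝ) = S ∧ (S : Matrix ι ι ℝ) * S = A := by
  obtain ⟨S, hS⟩ := (CFC.isUnit_sqrt_iff A hA.posSemidef.nonneg).2 hA.isUnit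
  exact ⟨S, hS ▸ (CFC.sqrt_nonneg A).isSelfAdjoint.star_eq,
    hS ▸ CFC.sqrt_mul_sqrt_self A hA.posSemidef.nonneg⟩

theorem le_inv_iff_spectrum_mul_le_one {A B : Matrix ι ι ℝ} (hA : A.PosDef)
    (hB : B.IsHermitian) : B ≤ A⁻¹ ↔ ∀ μ ∈ spectrum ℝ (A * B), μ ≤ 1 := by
  obtain ⟨S, hSstar, rfl⟩ := hA.exists_unit_sqrt
  have hconj : (S : Matrix ι ι ℝ) * ((S * S : Matrix ι ι ℝ)⁻¹ - B) * star (S : Matrix ι ι ℝ) =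
      1 - S * B * S := by
    rw [hSstar, Matrix.mul_inv_rev, ← Matrix.coe_units_inv]
    simp [mul_sub, sub_mul, mul_assoc]
  have hspec : spectrum ℝ ((S * S : Matrix ι ι ℝ) * B) =
      spectrum ℝ ((S : Matrix ι ι ℝ) * B * S) := by
    rw [← spectrum.units_conjugate (u := S) (a := (S : Matrix ι ι ℝ) * B * S)]
    simp [mul_assoc]
  have hSBS : IsSelfAdjoint ((S : Matrix ι ι ℝ) * B * S) := by
    simpa [hSstar] using hB.isSelfAdjoint.conjugate (S : Matrix ι ι ℝ)
  rw [← sub_nonneg, ← S.isUnit.star_right_conjugate_nonneg_iff, hconj, sub_nonneg, hspec]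
  exact le_algebraMap_iff_spectrum_le (r := (1 : ℝ)) hSBS

end

/-- for real symmetric positive definite `A`, `B` and the ellipsoids
`X = {x : ⟨Ax,x⟩ ≤ ħ}`, `P = {p : ⟨Bp,p⟩ ≤ ħ}`, one has `X^ħ ⊆ P` (i.e. `(X,P)` is a
quantum dual pair) iff every eigenvalue of `AB` is `≤ 1`, and `X^ħ = P` iff `AB = 1`. -/
theorem statement2 (n : ℕ) (hbar : ℝ) (hhbar : 0 < hbar)
    (A B : Matrix (Fin n) (Fin n) ℝ) (hA : A.PosDef) (hB : B.PosDef) :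
    (({p : Fin n → ℝ | ∀ x ∈ {x : Fin n → ℝ | A.mulVec x ⬝ᵥ x ≤ hbar}, p ⬝ᵥ x ≤ hbar}
        ⊆ {p : Fin n → ℝ | B.mulVec p ⬝ᵥ p ≤ hbar})
      ↔ ∀ μ ∈ spectrum ℝ (A * B), μ ≤ 1) ∧
    (({p : Fin n → ℝ | ∀ x ∈ {x : Fin n → ℝ | A.mulVec x ⬝ᵥ x ≤ hbar}, p ⬝ᵥ x ≤ hbar}
        = {p : Fin n → ℝ | B.mulVec p ⬝ᵥ p ≤ hbar})
      ↔ A * B = 1) := by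
  change (quantumPolar hbar (ellipsoid A hbar) ⊆ ellipsoid B hbar ↔ _) ∧
    (quantumPolar hbar (ellipsoid A hbar) = ellipsoid B hbar ↔ _)
  rw [quantumPolar_ellipsoid hhbar hA, ellipsoid_subset_ellipsoid_iff hhbar hA.inv hB.isHermitian,
    le_inv_iff_spectrum_mul_le_one hA hB.isHermitian, ellipsoid_inj hhbar hA.inv hB]
  exact ⟨Iff.rfl, fun h => h ▸ mul_nonsing_inv A hA.det_pos.ne'.isUnit, inv_eq_right_inv⟩
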